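/- arXiv:1902.08717 — 2 statements merged into one kernel-verified Lean document; each statement's English description precedes it below -/
import Mathlib

section
/- Let Σ, V be Hilbert spaces with bounded bilinear forms a, b satisfying the Brezzi conditions (coercivity of a on the kernel of b with constant α, and inf-sup condition for b with constant β). Define L((τ,v);(θ,w)) = a(τ,θ) + b(θ,v) + b(τ,w) on (Σ×V)². Then L satisfies an inf-sup condition: there exists γ > 0 depending only on α, β, ‖a‖, ‖b‖ such that for every (τ,v) ∈ Σ×V, sup_{(θ,w)≠0} L((τ,v);(θ,w)) / (‖θ‖_Σ + ‖w‖_V) ≥ γ (‖τ‖_Σ + ‖v‖_V). -/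
open InnerProductSpace


lemma exists_op {S V : Type*}
    [NormedAddCommGroup S] [InnerProductSpace ℝ S]
    [NormedAddCommGroup V] [InnerProductSpace ℝ V] [CompleteSpace V]
    (c : S →ₗ[ℝ] V →ₗ[ℝ] ℝ) (C : ℝ)
    (hbdd : ∀ (x : S) (y : V), |c x y| ≤ C * ‖x‖ * ‖y‖) :
    ∃ T : S →L[ℝ] V, ∀ (x : S) (y : V), ⟪T x, y⟫_ℝ = c x y := by
  have hC : ∀ (x : S) (y : V), ‖c x y‖ ≤ C * ‖x‖ * ‖y‖ := fun x y => by
    rw [Real.norm_eq_abs]; exact hbdd x y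
  set c2 : S →L[ℝ] V →L[ℝ] ℝ := LinearMap.mkContinuous₂ c C hC with hc2
  set T0 : S →ₗ[ℝ] V :=
    { toFun := fun x => (toDual ℝ V).symm (c2 x)
      map_add' := fun x y => by simp [map_add]
      map_smul' := fun r x => by simp }
  refine ⟨LinearMap.mkContinuous T0 ‖c2‖ (fun x => ?_), fun x y => ?_⟩
  · show ‖(toDual ℝ V).symm (c2 x)‖ ≤ _
    rw [LinearIsometryEquiv.norm_map]
    exact c2.le_opNorm x
  · show ⟪(toDual ℝ V).symm (c2 x), y⟫_ℝ = c x y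
    rw [toDual_symm_apply]
    rfl

set_option maxHeartbeats 1000000 in
/-- Stability of the combined form `L((τ,v);(θ,w)) = a(τ,θ) + b(θ,v) + b(τ,w)`
under the Brezzi conditions. -/
theorem combined_form_infsup {S V : Type*}
    [NormedAddCommGroup S] [InnerProductSpace ℝ S] [CompleteSpace S]
    [NormedAddCommGroup V] [InnerProductSpace ℝ V] [CompleteSpace V]
    (a : S →ₗ[ℝ] S →ₗ[ℝ] ℝ) (b : S →ₗ[ℝ] V →ₗ[ℝ] ℝ)
    (Ca Cb α β : ℝ) (hCa : 0 < Ca) (hCb : 0 < Cb) (hα : 0 < α) (hβ : 0 < β)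
    (ha_bdd : ∀ σ τ : S, |a σ τ| ≤ Ca * ‖σ‖ * ‖τ‖)
    (hb_bdd : ∀ (τ : S) (v : V), |b τ v| ≤ Cb * ‖τ‖ * ‖v‖)
    (ha_sym : ∀ σ τ : S, a σ τ = a τ σ)
    (ha_psd : ∀ τ : S, 0 ≤ a τ τ)
    (ha_coer : ∀ τ : S, (∀ v : V, b τ v = 0) → α * ‖τ‖ ^ 2 ≤ a τ τ)
    (hb_infsup : ∀ v : V, β * ‖v‖ ≤ ⨆ τ : {τ : S // ‖τ‖ ≤ 1}, b τ v) :
    ∃ γ > 0, ∀ (τ : S) (v : V),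
      γ * (‖τ‖ + ‖v‖) ≤
        ⨆ p : {p : S × V // ‖p.1‖ + ‖p.2‖ ≤ 1},
          (a τ (p : S × V).1 + b (p : S × V).1 v + b τ (p : S × V).2) := by
  obtain ⟨A, hA⟩ := exists_op a Ca ha_bdd
  obtain ⟨B, hB⟩ := exists_op b Cb hb_bdd
  obtain ⟨Bs, hBs⟩ := exists_op b.flip Cb
    (fun v τ => by
      rw [LinearMap.flip_apply]
      exact le_of_le_of_eq (hb_bdd τ v) (by ring))
  -- inf-sup for b gives a lower bound on ‖Bs v‖
  have hBsnorm : ∀ v : V, β * ‖v‖ ≤ ‖Bs v‖ := by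
    intro v
    haveI : Nonempty {τ : S // ‖τ‖ ≤ 1} := ⟨⟨0, by simp⟩⟩
    refine le_trans (hb_infsup v) (ciSup_le fun q => ?_)
    calc b q.1 v = ⟪Bs v, q.1⟫_ℝ := by rw [hBs]; rfl
      _ ≤ ‖Bs v‖ * ‖q.1‖ := real_inner_le_norm _ _
      _ ≤ ‖Bs v‖ * 1 := mul_le_mul_of_nonneg_left q.2 (norm_nonneg _)
      _ = ‖Bs v‖ := mul_one _
  set W : Submodule ℝ S := LinearMap.range Bs.toLinearMap with hW
  set Wc : Submodule ℝ S := W.topologicalClosure with hWc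
  -- B is bounded below on the closure of the range of Bs
  have hBlow : ∀ σ ∈ Wc, β * ‖σ‖ ≤ ‖B σ‖ := by
    have hsub : (W : Set S) ⊆ {σ : S | β * ‖σ‖ ≤ ‖B σ‖} := by
      rintro σ ⟨v, rfl⟩
      simp only [Set.mem_setOf_eq, ContinuousLinearMap.coe_coe]
      by_cases h0 : Bs v = 0
      · simp [h0]
      · have h1 := hBsnorm v
        have h2 : ‖Bs v‖ ^ 2 ≤ ‖B (Bs v)‖ * ‖v‖ := by
          have e1 : ⟪B (Bs v), v⟫_ℝ = b (Bs v) v := hB _ _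
          have e2 : ⟪Bs v, Bs v⟫_ℝ = b (Bs v) v := by rw [hBs]; rfl
          calc ‖Bs v‖ ^ 2 = ⟪Bs v, Bs v⟫_ℝ := (real_inner_self_eq_norm_sq _).symm
            _ = ⟪B (Bs v), v⟫_ℝ := by rw [e1, e2]
            _ ≤ ‖B (Bs v)‖ * ‖v‖ := real_inner_le_norm _ _
        have hpos : 0 < ‖Bs v‖ := norm_pos_iff.2 h0
        nlinarith [norm_nonneg (B (Bs v))]
    have hclosed : IsClosed {σ : S | β * ‖σ‖ ≤ ‖B σ‖} :=
      isClosed_le (continuous_const.mul continuous_norm) B.continuous.norm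
    intro σ hσ
    have hσ' : σ ∈ closure (W : Set S) := by
      rw [← Submodule.topologicalClosure_coe] at *
      exact hσ
    exact closure_minimal hsub hclosed hσ'
  set D : ℝ := β ^ 2 + α * β + Ca * β + (β + Ca) * (Ca + α) with hD
  have hDpos : 0 < D := by positivity
  refine ⟨α * β ^ 2 / (2 * D), by positivity, fun τ v => ?_⟩
  set u : S := A τ + Bs v with hu_def
  set F : {p : S × V // ‖p.1‖ + ‖p.2‖ ≤ 1} → ℝ :=
    fun p => a τ (p : S × V).1 + b (p : S × V).1 v + b τ (p : S × V).2 with hF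
  have hbddF : BddAbove (Set.range F) := by
    refine ⟨Ca * ‖τ‖ + Cb * ‖v‖ + Cb * ‖τ‖, ?_⟩
    rintro x ⟨⟨⟨θ, w⟩, hp⟩, rfl⟩
    have hθ : ‖θ‖ ≤ 1 := le_trans (le_add_of_nonneg_right (norm_nonneg _)) hp
    have hw : ‖w‖ ≤ 1 := le_trans (le_add_of_nonneg_left (norm_nonneg _)) hp
    have b1 : a τ θ ≤ Ca * ‖τ‖ * ‖θ‖ := le_trans (le_abs_self _) (ha_bdd τ θ)
    have b2 : b θ v ≤ Cb * ‖θ‖ * ‖v‖ := le_trans (le_abs_self _) (hb_bdd θ v)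
    have b3 : b τ w ≤ Cb * ‖τ‖ * ‖w‖ := le_trans (le_abs_self _) (hb_bdd τ w)
    have m1 : Ca * ‖τ‖ * ‖θ‖ ≤ Ca * ‖τ‖ :=
      mul_le_of_le_one_right (by positivity) hθ
    have m2 : Cb * ‖θ‖ * ‖v‖ ≤ Cb * ‖v‖ := by
      have := mul_le_of_le_one_right (show (0:ℝ) ≤ Cb * ‖v‖ by positivity) hθ
      linarith [this]
    have m3 : Cb * ‖τ‖ * ‖w‖ ≤ Cb * ‖τ‖ :=
      mul_le_of_le_one_right (by positivity) hw
    show a τ θ + b θ v + b τ w ≤ _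
    linarith
  have hM0 : (0:ℝ) ≤ ⨆ p, F p := by
    have h0 : F ⟨(0, 0), by simp⟩ = 0 := by simp [hF]
    calc (0:ℝ) = F ⟨(0, 0), by simp⟩ := h0.symm
      _ ≤ ⨆ p, F p := le_ciSup hbddF _
  -- ‖u‖ is dominated by the sup
  have hu : ‖u‖ ≤ ⨆ p, F p := by
    by_cases h0 : u = 0
    · simpa [h0] using hM0
    · have hupos : 0 < ‖u‖ := norm_pos_iff.2 h0
      set θ : S := ‖u‖⁻¹ • u with hθdef
      have hθn : ‖θ‖ = 1 := by
        rw [hθdef, norm_smul, norm_inv, norm_norm, inv_mul_cancel₀ hupos.ne']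
      have hval : F ⟨(θ, 0), by simp [hθn]⟩ = ‖u‖ := by
        have e1 : a τ θ + b θ v = ⟪u, θ⟫_ℝ := by
          rw [hu_def, inner_add_left, hA]
          congr 1
          rw [hBs]; rfl
        have e2 : ⟪u, θ⟫_ℝ = ‖u‖ := by
          rw [hθdef, real_inner_smul_right, real_inner_self_eq_norm_sq]
          field_simp
        simp only [hF]
        simpa [e1, e2] using rfl
      calc ‖u‖ = F ⟨(θ, 0), by simp [hθn]⟩ := hval.symm
        _ ≤ ⨆ p, F p := le_ciSup hbddF _
  -- ‖B τ‖ is dominated by the sup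
  have hk : ‖B τ‖ ≤ ⨆ p, F p := by
    by_cases h0 : B τ = 0
    · simpa [h0] using hM0
    · have hkpos : 0 < ‖B τ‖ := norm_pos_iff.2 h0
      set w : V := ‖B τ‖⁻¹ • B τ with hwdef
      have hwn : ‖w‖ = 1 := by
        rw [hwdef, norm_smul, norm_inv, norm_norm, inv_mul_cancel₀ hkpos.ne']
      have hval : F ⟨(0, w), by simp [hwn]⟩ = ‖B τ‖ := by
        have e1 : b τ w = ⟪B τ, w⟫_ℝ := (hB τ w).symm
        have e2 : ⟪B τ, w⟫_ℝ = ‖B τ‖ := by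
          rw [hwdef, real_inner_smul_right, real_inner_self_eq_norm_sq]
          field_simp
        simp only [hF]
        simpa [e1, e2] using rfl
      calc ‖B τ‖ = F ⟨(0, w), by simp [hwn]⟩ := hval.symm
        _ ≤ ⨆ p, F p := le_ciSup hbddF _
  -- orthogonal decomposition of τ
  haveI : CompleteSpace Wc := W.isClosed_topologicalClosure.completeSpace_coe
  obtain ⟨τ1, hτ1, τ0, hτ0, hsum⟩ := Wc.exists_add_mem_mem_orthogonal τ
  have hτ0b : ∀ w : V, b τ0 w = 0 := by
    intro w
    have hmem : Bs w ∈ Wc := Submodule.le_topologicalClosure W ⟨w, rfl⟩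
    have := (Submodule.mem_orthogonal Wc τ0).1 hτ0 (Bs w) hmem
    calc b τ0 w = ⟪Bs w, τ0⟫_ℝ := by rw [hBs]; rfl
      _ = 0 := this
  have hBτ0 : B τ0 = 0 := by
    apply ext_inner_right ℝ
    intro w
    rw [hB, hτ0b w, inner_zero_left]
  have hBτ : B τ = B τ1 := by
    rw [hsum, map_add, hBτ0, add_zero]
  -- key inequalities
  have h1 : β * ‖τ1‖ ≤ ‖B τ‖ := by rw [hBτ]; exact hBlow τ1 hτ1
  have h2 : α * ‖τ0‖ ≤ ‖u‖ + Ca * ‖τ1‖ := by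
    by_cases hz : τ0 = 0
    · simp only [hz, norm_zero, mul_zero]; positivity
    · have hz' : 0 < ‖τ0‖ := norm_pos_iff.2 hz
      have c1 : α * ‖τ0‖ ^ 2 ≤ a τ0 τ0 := ha_coer τ0 hτ0b
      have e1 : ⟪u, τ0⟫_ℝ = a τ τ0 + b τ0 v := by
        rw [hu_def, inner_add_left, hA]
        congr 1
        rw [hBs]; rfl
      have e2 : a τ τ0 = a τ1 τ0 + a τ0 τ0 := by
        rw [hsum, map_add, LinearMap.add_apply]
      have c2 : a τ0 τ0 ≤ ‖u‖ * ‖τ0‖ + Ca * ‖τ1‖ * ‖τ0‖ := by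
        have i1 : ⟪u, τ0⟫_ℝ ≤ ‖u‖ * ‖τ0‖ := real_inner_le_norm _ _
        have i2 : -(a τ1 τ0) ≤ Ca * ‖τ1‖ * ‖τ0‖ :=
          le_trans (neg_le_abs _) (ha_bdd τ1 τ0)
        have : a τ0 τ0 = ⟪u, τ0⟫_ℝ - a τ1 τ0 - b τ0 v := by
          rw [e1, e2]; ring
        rw [this, hτ0b v]
        linarith
      nlinarith
  have h3 : β * ‖v‖ ≤ ‖u‖ + Ca * ‖τ‖ := by
    by_cases hz : Bs v = 0
    · have : β * ‖v‖ ≤ 0 := by rw [← norm_zero (E := S), ← hz]; exact hBsnorm v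
      have : (0:ℝ) ≤ ‖u‖ + Ca * ‖τ‖ := by positivity
      linarith
    · have hz' : 0 < ‖Bs v‖ := norm_pos_iff.2 hz
      have e1 : ⟪u, Bs v⟫_ℝ = a τ (Bs v) + ‖Bs v‖ ^ 2 := by
        rw [hu_def, inner_add_left, hA, real_inner_self_eq_norm_sq]
      have i1 : ⟪u, Bs v⟫_ℝ ≤ ‖u‖ * ‖Bs v‖ := real_inner_le_norm _ _
      have i2 : -(a τ (Bs v)) ≤ Ca * ‖τ‖ * ‖Bs v‖ :=
        le_trans (neg_le_abs _) (ha_bdd τ (Bs v))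
      have c1 : ‖Bs v‖ ≤ ‖u‖ + Ca * ‖τ‖ := by nlinarith
      linarith [hBsnorm v]
  have h4 : ‖τ‖ ≤ ‖τ1‖ + ‖τ0‖ := by rw [hsum]; exact norm_add_le _ _
  -- combine
  set M : ℝ := ⨆ p, F p with hM
  have h5 : α * β * ‖τ‖ ≤ β * ‖u‖ + (Ca + α) * ‖B τ‖ := by
    linarith [mul_le_mul_of_nonneg_left h4 (mul_pos hα hβ).le,
      mul_le_mul_of_nonneg_left h2 hβ.le,
      mul_le_mul_of_nonneg_left h1 hα.le,
      mul_le_mul_of_nonneg_left h1 hCa.le]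
  have h6 : α * β ^ 2 * ‖v‖ ≤ (α * β + Ca * β) * ‖u‖ + Ca * (Ca + α) * ‖B τ‖ := by
    linarith [mul_le_mul_of_nonneg_left h3 (mul_pos hα hβ).le,
      mul_le_mul_of_nonneg_left h5 hCa.le]
  rw [div_mul_eq_mul_div, div_le_iff₀ (by positivity : (0:ℝ) < 2 * D)]
  calc α * β ^ 2 * (‖τ‖ + ‖v‖)
      = β * (α * β * ‖τ‖) + α * β ^ 2 * ‖v‖ := by ring
    _ ≤ β * (β * ‖u‖ + (Ca + α) * ‖B τ‖)
        + ((α * β + Ca * β) * ‖u‖ + Ca * (Ca + α) * ‖B τ‖) :=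
        add_le_add (mul_le_mul_of_nonneg_left h5 hβ.le) h6
    _ = (β ^ 2 + α * β + Ca * β) * ‖u‖ + (β + Ca) * (Ca + α) * ‖B τ‖ := by ring
    _ ≤ (β ^ 2 + α * β + Ca * β) * M + (β + Ca) * (Ca + α) * M :=
        add_le_add (mul_le_mul_of_nonneg_left hu (by positivity))
          (mul_le_mul_of_nonneg_left hk (by positivity))
    _ = D * M := by rw [hD]; ring
    _ ≤ M * (2 * D) := by linarith [mul_nonneg hDpos.le hM0]
end

section
/- For any smooth matrix field ρ : R³ → M (3×3 matrices), with curl applied row-wise, the identity skw(curl ρ) = −(1/2) Skw₃(div(Ξρ)) holds, where Ξρ = ρ^T − tr(ρ)I, div is applied row-wise producing a vector, skw(τ) = (τ−τ^T)/2, and Skw₃((v₁,v₂,v₃)) is the skew matrix [[0, v₃, −v₂],[−v₃, 0, v₁],[v₂, −v₁, 0]]. -/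
open Matrix

/-- Partial derivative in the `j`-th coordinate direction. -/
noncomputable def pd3 (j : Fin 3) (f : (Fin 3 → ℝ) → ℝ) (x : Fin 3 → ℝ) : ℝ :=
  fderiv ℝ f x (Pi.single j 1)

/-- 3D curl of a vector field. -/
noncomputable def curlVec3 (F : (Fin 3 → ℝ) → (Fin 3 → ℝ)) (x : Fin 3 → ℝ) :
    Fin 3 → ℝ :=
  ![pd3 1 (fun y => F y 2) x - pd3 2 (fun y => F y 1) x,
    pd3 2 (fun y => F y 0) x - pd3 0 (fun y => F y 2) x,
    pd3 0 (fun y => F y 1) x - pd3 1 (fun y => F y 0) x]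

/-- Row-wise curl of a matrix field. -/
noncomputable def curlMat3 (ρ : (Fin 3 → ℝ) → Matrix (Fin 3) (Fin 3) ℝ)
    (x : Fin 3 → ℝ) : Matrix (Fin 3) (Fin 3) ℝ :=
  Matrix.of fun i j => curlVec3 (fun y => ρ y i) x j

/-- Row-wise divergence of a matrix field. -/
noncomputable def divRow3 (A : (Fin 3 → ℝ) → Matrix (Fin 3) (Fin 3) ℝ)
    (x : Fin 3 → ℝ) : Fin 3 → ℝ :=
  fun i => ∑ j, pd3 j (fun y => A y i j) x

/-- The algebraic operator `Ξρ = ρᵀ − tr(ρ)I`. -/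
noncomputable def Xi3 (ρ : Matrix (Fin 3) (Fin 3) ℝ) : Matrix (Fin 3) (Fin 3) ℝ :=
  ρᵀ - ρ.trace • (1 : Matrix (Fin 3) (Fin 3) ℝ)

/-- The skew matrix attached to a vector. -/
def Skw3 (v : Fin 3 → ℝ) : Matrix (Fin 3) (Fin 3) ℝ :=
  !![0, v 2, -(v 1); -(v 2), 0, v 0; v 1, -(v 0), 0]

lemma pd3_sub {f g : (Fin 3 → ℝ) → ℝ} {x : Fin 3 → ℝ}
    (hf : DifferentiableAt ℝ f x) (hg : DifferentiableAt ℝ g x) (j : Fin 3) :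
    pd3 j (fun y => f y - g y) x = pd3 j f x - pd3 j g x := by
  simp [pd3, fderiv_fun_sub hf hg]

lemma pd3_add {f g : (Fin 3 → ℝ) → ℝ} {x : Fin 3 → ℝ}
    (hf : DifferentiableAt ℝ f x) (hg : DifferentiableAt ℝ g x) (j : Fin 3) :
    pd3 j (fun y => f y + g y) x = pd3 j f x + pd3 j g x := by
  simp [pd3, fderiv_fun_add hf hg]

/-- Arnold–Falk–Winther identity in 3D: `skw(curl ρ) = −(1/2) Skw₃(div(Ξρ))`. -/
theorem skw_curl_3d (ρ : (Fin 3 → ℝ) → Matrix (Fin 3) (Fin 3) ℝ)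
    (hρ : ∀ i j, ContDiff ℝ (⊤ : ℕ∞) (fun x => ρ x i j)) (x : Fin 3 → ℝ) :
    (1 / 2 : ℝ) • (curlMat3 ρ x - (curlMat3 ρ x)ᵀ) =
      -((1 / 2 : ℝ) • Skw3 (divRow3 (fun y => Xi3 (ρ y)) x)) := by
  have hd : ∀ a b : Fin 3, DifferentiableAt ℝ (fun y => ρ y a b) x :=
    fun a b => ((hρ a b).differentiable (by simp)).differentiableAt
  have htr : DifferentiableAt ℝ (fun y => (ρ y).trace) x := by
    simp only [Matrix.trace_fin_three]
    exact ((hd 0 0).add (hd 1 1)).add (hd 2 2)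
  have ptr : ∀ j : Fin 3, pd3 j (fun y => (ρ y).trace) x =
      pd3 j (fun y => ρ y 0 0) x + pd3 j (fun y => ρ y 1 1) x +
        pd3 j (fun y => ρ y 2 2) x := by
    intro j
    simp only [Matrix.trace_fin_three]
    rw [pd3_add ((hd 0 0).fun_add (hd 1 1)) (hd 2 2), pd3_add (hd 0 0) (hd 1 1)]
  have key : ∀ i j : Fin 3, pd3 j (fun y => Xi3 (ρ y) i j) x =
      pd3 j (fun y => ρ y j i) x -
        (if i = j then pd3 j (fun y => (ρ y).trace) x else 0) := by
    intro i j
    by_cases h : i = j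
    · subst h
      simp only [Xi3, Matrix.sub_apply, Matrix.transpose_apply, Matrix.smul_apply,
        Matrix.one_apply_eq, smul_eq_mul, mul_one, if_true]
      exact pd3_sub (hd i i) htr i
    · simp only [Xi3, Matrix.sub_apply, Matrix.transpose_apply, Matrix.smul_apply,
        Matrix.one_apply_ne h, smul_eq_mul, mul_zero, sub_zero, h, if_false]
  have hdiv : ∀ i : Fin 3, divRow3 (fun y => Xi3 (ρ y)) x i =
      pd3 0 (fun y => ρ y 0 i) x + pd3 1 (fun y => ρ y 1 i) x +
        pd3 2 (fun y => ρ y 2 i) x - pd3 i (fun y => (ρ y).trace) x := by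
    intro i
    simp only [divRow3, Fin.sum_univ_three, key]
    fin_cases i <;> simp <;> ring
  ext i j
  fin_cases i <;> fin_cases j <;>
    simp [curlMat3, curlVec3, Skw3, hdiv, ptr, Matrix.smul_apply, Matrix.sub_apply,
      Matrix.neg_apply, Matrix.transpose_apply] <;> ring
end
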